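/- Let R = A[z;σ] with A = F[x]/(x^n−1), char(F) ∤ n. A submodule C ⊆ F[z]^n is σ-cyclic and delay-free if and only if the corresponding left ideal J = p(C) in R is a principal left ideal generated by some g ∈ R whose support equals the support of its z-free term g_0, i.e., e_k g ≠ 0 ⟺ e_k g_0 ≠ 0 for all primitive idempotents e_k of A. In particular every delay-free left ideal of R is a principal left ideal. -/

import Mathlib

/-!
`A` is a finite reduced ring (`x^n - 1` is separable since `char F ∤ n`), i.e. a finite product
of fields: its primitive idempotents are orthogonal, sum to `1`, and `e` is a multiple of every
nonzero `y ∈ eA`. So every `h ∈ R = A[z;σ]` is the sum of its components `e h`, `e` running over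
the primitive idempotents (as constants).

For a delay-free left ideal `J`, pick in each component `J ∩ eR` an element `t_e` of least degree
with nonzero constant term (`t_e = 0` if there is none), and let `g = ∑ t_e`; then `e g = t_e`,
which is the support condition. An element `k ∈ J ∩ eR` lies in `Rg` by induction on its degree:
subtracting a constant multiple of `t_e` kills the constant term of `k` without raising the
degree, and delay-freeness divides the difference by `z`. Conversely, the support condition
forces `a g = 0` whenever `a g_0 = 0`; so `z v = u g` implies `z v = (u - u_0) g`, and `z` can be
cancelled.
-/

open Polynomial

/-- A = F[x]/(x^n − 1). -/
abbrev Amod (F : Type) [Field F] (n : ℕ) : Type :=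
  Polynomial F ⧸ (Ideal.span {Polynomial.X ^ n - 1} : Ideal (Polynomial F))

/-- the class of x in A. -/
noncomputable def xbar (F : Type) [Field F] (n : ℕ) : Amod F n :=
  Ideal.Quotient.mk _ Polynomial.X

/-- The skew multiplication of A[z;σ]: a*z = z*σ(a). -/
noncomputable def skewMul {F A : Type*} [CommRing F] [CommRing A] [Algebra F A]
    (σ : A ≃ₐ[F] A) (g h : Polynomial A) : Polynomial A :=
  ∑ ν ∈ g.support, ∑ μ ∈ h.support,
    Polynomial.monomial (ν + μ) ((σ ^ μ) (g.coeff ν) * h.coeff μ)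

/-- The coefficientwise identification p : F[z]^n → A[z]. -/
noncomputable def pId (F : Type) [Field F] (n : ℕ) (v : Fin n → Polynomial F) :
    Polynomial (Amod F n) :=
  ∑ i : Fin n, Polynomial.C (xbar F n ^ (i : ℕ)) * (v i).map (algebraMap F (Amod F n))

/-- primitive idempotent: a nonzero idempotent which is not a sum of two nonzero
orthogonal idempotents. -/
def IsPrimIdem {A : Type*} [CommRing A] (e : A) : Prop :=
  e * e = e ∧ e ≠ 0 ∧
    ¬ ∃ a b : A, a * a = a ∧ b * b = b ∧ a * b = 0 ∧ a ≠ 0 ∧ b ≠ 0 ∧ e = a + b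

namespace IsPrimIdem

variable {A : Type*} [CommRing A] {e : A}

theorem eq_of_mul_eq_self (he : IsPrimIdem e) {x : A} (hx : x * x = x) (hxe : x * e = x)
    (hx0 : x ≠ 0) : x = e := by
  by_contra hne
  exact he.2.2 ⟨x, e - x, hx, by linear_combination he.1 - 2 * hxe + hx,
    by linear_combination hxe - hx, hx0, sub_ne_zero_of_ne (Ne.symm hne), by ring⟩

theorem mul_eq_zero_of_ne {e' : A} (he : IsPrimIdem e) (he' : IsPrimIdem e') (hne : e ≠ e') :
    e * e' = 0 := by
  by_contra h
  have hidem : e * e' * (e * e') = e * e' := by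
    linear_combination e' * e' * he.1 + e * he'.1
  refine hne ((he.eq_of_mul_eq_self hidem ?_ h).symm.trans (he'.eq_of_mul_eq_self hidem ?_ h))
  · linear_combination e' * he.1
  · linear_combination e * he'.1

theorem exists_mul_eq [IsSemisimpleRing A] (he : IsPrimIdem e) {y : A} (hy : e * y = y)
    (hy0 : y ≠ 0) : ∃ c, c * y = e := by
  obtain ⟨f, hf, hspan⟩ := IsSemisimpleRing.ideal_eq_span_idempotent (Ideal.span {y})
  obtain ⟨c, hc⟩ := Ideal.mem_span_singleton'.mp (hspan ▸ Ideal.mem_span_singleton_self f)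
  obtain ⟨d, hd⟩ := Ideal.mem_span_singleton'.mp (hspan ▸ Ideal.mem_span_singleton_self y)
  have hf0 : f ≠ 0 := by rintro rfl; exact hy0 (by rw [← hd, mul_zero])
  have hfe : f * e = f := by rw [← hc, mul_assoc, mul_comm y, hy]
  exact ⟨c, hc.trans (he.eq_of_mul_eq_self hf hfe hf0)⟩

end IsPrimIdem

theorem exists_isPrimIdem_mul_eq_self {A : Type*} [CommRing A] [IsArtinianRing A] {f : A}
    (hf : f * f = f) (hf0 : f ≠ 0) : ∃ e, IsPrimIdem e ∧ e * f = e := by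
  obtain ⟨e, ⟨he, he0, hef⟩, hmin⟩ := exists_minimalFor_of_wellFoundedLT
    (fun e : A => e * e = e ∧ e ≠ 0 ∧ e * f = e) (fun e => Ideal.span {e}) ⟨f, hf, hf0, hf⟩
  refine ⟨e, ⟨he, he0, ?_⟩, hef⟩
  rintro ⟨a, b, ha, hb, hab, ha0, hb0, rfl⟩
  have hae : a * (a + b) = a := by rw [mul_add, ha, hab, add_zero]
  have hle : Ideal.span {a} ≤ Ideal.span {a + b} := by
    rw [Ideal.span_singleton_le_span_singleton]; exact ⟨a, by rw [mul_comm, hae]⟩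
  obtain ⟨r, hr⟩ := Ideal.mem_span_singleton'.mp
    (hmin ⟨ha, ha0, by rw [← hae, mul_assoc, hef]⟩ hle (Ideal.mem_span_singleton_self (a + b)))
  exact hb0 (by linear_combination -hb - b * hr + (r - 1) * hab)

section PrimIdems

variable (A : Type*) [CommRing A] [Finite A]

noncomputable def primIdems : Finset A := (Set.toFinite {e : A | IsPrimIdem e}).toFinset

variable {A}

theorem mem_primIdems {e : A} : e ∈ primIdems A ↔ IsPrimIdem e := Set.Finite.mem_toFinset _

theorem IsPrimIdem.mul_sum_primIdems {e : A} (he : IsPrimIdem e) :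
    e * ∑ e' ∈ primIdems A, e' = e := by
  rw [Finset.mul_sum, Finset.sum_eq_single_of_mem e (mem_primIdems.2 he)
    fun e' he' hne => he.mul_eq_zero_of_ne (mem_primIdems.1 he') hne.symm, he.1]

theorem sum_primIdems : ∑ e ∈ primIdems A, e = 1 := by
  set s := ∑ e ∈ primIdems A, e
  have hs : s * s = s := by
    conv_lhs => rw [Finset.sum_mul]
    exact Finset.sum_congr rfl fun e he => (mem_primIdems.1 he).mul_sum_primIdems
  by_contra h
  obtain ⟨e, he, hef⟩ := exists_isPrimIdem_mul_eq_self (f := 1 - s)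
    (by linear_combination hs) (sub_ne_zero.2 (Ne.symm h))
  exact he.2.1 (by rw [← hef, mul_sub, mul_one, he.mul_sum_primIdems, sub_self])

end PrimIdems

section SkewMul

variable {F A : Type*} [CommRing F] [CommRing A] [Algebra F A] (σ : A ≃ₐ[F] A)

open Finset

theorem coeff_skewMul (g h : A[X]) (k : ℕ) :
    (skewMul σ g h).coeff k =
      ∑ x ∈ antidiagonal k, (σ ^ x.2) (g.coeff x.1) * h.coeff x.2 := by
  simp only [skewMul, finsetSum_coeff, coeff_monomial]
  rw [← sum_product', ← sum_filter]
  refine sum_subset (fun x hx => HasAntidiagonal.mem_antidiagonal.2 (mem_filter.1 hx).2)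
    fun x hx hx' => ?_
  by_cases hg : x.1 ∈ g.support
  · have hh : x.2 ∉ h.support := fun hh => hx' (mem_filter.2 ⟨mem_product.2 ⟨hg, hh⟩,
      HasAntidiagonal.mem_antidiagonal.1 hx⟩)
    rw [notMem_support_iff.1 hh, mul_zero]
  · rw [notMem_support_iff.1 hg, map_zero, zero_mul]

theorem skewMul_add_left (g g' h : A[X]) :
    skewMul σ (g + g') h = skewMul σ g h + skewMul σ g' h := by
  ext k
  simp only [coeff_skewMul, coeff_add, map_add, add_mul, sum_add_distrib]

theorem skewMul_add_right (g h h' : A[X]) :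
    skewMul σ g (h + h') = skewMul σ g h + skewMul σ g h' := by
  ext k
  simp only [coeff_skewMul, coeff_add, mul_add, sum_add_distrib]

@[simp] theorem skewMul_zero_left (h : A[X]) : skewMul σ 0 h = 0 := by
  ext k; simp [coeff_skewMul]

@[simp] theorem skewMul_zero_right (g : A[X]) : skewMul σ g 0 = 0 := by
  ext k; simp [coeff_skewMul]

theorem skewMul_sum_left {ι : Type*} (s : Finset ι) (f : ι → A[X]) (h : A[X]) :
    skewMul σ (∑ i ∈ s, f i) h = ∑ i ∈ s, skewMul σ (f i) h := by
  ext k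
  simp only [coeff_skewMul, finsetSum_coeff, map_sum, sum_mul]
  exact sum_comm

theorem skewMul_sum_right {ι : Type*} (s : Finset ι) (g : A[X]) (f : ι → A[X]) :
    skewMul σ g (∑ i ∈ s, f i) = ∑ i ∈ s, skewMul σ g (f i) := by
  ext k
  simp only [coeff_skewMul, finsetSum_coeff, mul_sum]
  exact sum_comm

theorem skewMul_monomial_monomial (a b : ℕ) (x y : A) :
    skewMul σ (monomial a x) (monomial b y) = monomial (a + b) ((σ ^ b) x * y) := by
  ext k
  rw [coeff_skewMul, coeff_monomial]
  split_ifs with hk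
  · rw [sum_eq_single_of_mem (a, b) (HasAntidiagonal.mem_antidiagonal.2 hk)]
    · simp
    · rintro ⟨i, j⟩ - hne
      simp only [coeff_monomial]
      split_ifs <;> simp_all
  · refine sum_eq_zero fun ⟨i, j⟩ hij => ?_
    rw [HasAntidiagonal.mem_antidiagonal] at hij
    simp only [coeff_monomial]
    split_ifs <;> simp_all

theorem skewMul_assoc (f g h : A[X]) :
    skewMul σ f (skewMul σ g h) = skewMul σ (skewMul σ f g) h := by
  induction f using Polynomial.induction_on' with
  | add p q hp hq => rw [skewMul_add_left, skewMul_add_left, hp, hq, skewMul_add_left]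
  | monomial a x =>
    induction g using Polynomial.induction_on' with
    | add p q hp hq =>
      rw [skewMul_add_left, skewMul_add_right, hp, hq, skewMul_add_right, skewMul_add_left]
    | monomial b y =>
      induction h using Polynomial.induction_on' with
      | add p q hp hq => rw [skewMul_add_right, skewMul_add_right, hp, hq, skewMul_add_right]
      | monomial c z =>
        simp only [skewMul_monomial_monomial, add_assoc, map_mul, ← mul_assoc,
          ← AlgEquiv.mul_apply, ← pow_add, add_comm b c]

theorem coeff_skewMul_C (c : A) (h : A[X]) (k : ℕ) :
    (skewMul σ (C c) h).coeff k = (σ ^ k) c * h.coeff k := by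
  rw [coeff_skewMul, sum_eq_single_of_mem (0, k) (by simp)]
  · simp
  · rintro ⟨i, j⟩ hij hne
    rw [HasAntidiagonal.mem_antidiagonal] at hij
    rw [coeff_C, if_neg (by rintro rfl; simp_all), map_zero, zero_mul]

theorem skewMul_one_left (h : A[X]) : skewMul σ 1 h = h := by
  ext k
  rw [← C_1, coeff_skewMul_C, map_one, one_mul]

theorem coeff_zero_skewMul (g h : A[X]) :
    (skewMul σ g h).coeff 0 = g.coeff 0 * h.coeff 0 := by
  simp [coeff_skewMul]

theorem skewMul_C_skewMul_C (a b : A) (h : A[X]) :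
    skewMul σ (C a) (skewMul σ (C b) h) = skewMul σ (C (a * b)) h := by
  ext k
  rw [coeff_skewMul_C, coeff_skewMul_C, coeff_skewMul_C, map_mul, mul_assoc]

theorem skewMul_X_pow_left (d : ℕ) (h : A[X]) : skewMul σ (X ^ d) h = X ^ d * h := by
  ext k
  rw [coeff_skewMul, coeff_mul]
  refine sum_congr rfl fun x _ => ?_
  rw [coeff_X_pow]
  split_ifs <;> simp

theorem skewMul_X_left (h : A[X]) : skewMul σ X h = X * h := by
  simpa using skewMul_X_pow_left σ 1 h

theorem coeff_zero_skewMul_C (c : A) (h : A[X]) : (skewMul σ (C c) h).coeff 0 = c * h.coeff 0 := by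
  rw [coeff_zero_skewMul, coeff_C_zero]

theorem natDegree_skewMul_C_le (c : A) (h : A[X]) :
    (skewMul σ (C c) h).natDegree ≤ h.natDegree :=
  natDegree_le_iff_coeff_eq_zero.2 fun k hk => by
    rw [coeff_skewMul_C, coeff_eq_zero_of_natDegree_lt hk, mul_zero]

theorem sum_skewMul_C_primIdems [Finite A] (h : A[X]) :
    ∑ e ∈ primIdems A, skewMul σ (C e) h = h := by
  rw [← skewMul_sum_left, ← map_sum, sum_primIdems, C_1, skewMul_one_left]

end SkewMul

section Amod

variable {F : Type} [Field F] {n : ℕ}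

theorem monic_X_pow_sub_one (hn : 0 < n) : (X ^ n - 1 : F[X]).Monic := by
  simpa using monic_X_pow_sub_C (1 : F) hn.ne'

noncomputable def Amod.basis (hn : 0 < n) : Module.Basis (Fin n) F (Amod F n) :=
  (AdjoinRoot.powerBasis' (monic_X_pow_sub_one hn)).basis.reindex
    (finCongr (by simpa using natDegree_X_pow_sub_C (n := n) (r := (1 : F))))

theorem Amod.basis_apply (hn : 0 < n) (i : Fin n) : Amod.basis hn i = xbar F n ^ (i : ℕ) := by
  erw [Amod.basis, Module.Basis.reindex_apply, PowerBasis.basis_eq_pow, AdjoinRoot.powerBasis'_gen]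
  rfl

theorem Amod.finite [Finite F] (hn : 0 < n) : Finite (Amod F n) :=
  have := Module.Finite.of_basis (Amod.basis (F := F) hn)
  Module.finite_of_finite F

theorem Amod.isReduced (hchar : ¬ ringChar F ∣ n) : IsReduced (Amod F n) := by
  rw [← Ideal.isRadical_iff_quotient_reduced, ← isRadical_iff_span_singleton, ← C_1]
  exact (separable_X_pow_sub_C' (ringChar F) n 1 hchar one_ne_zero).squarefree.isRadical

theorem coeff_pId (v : Fin n → F[X]) (k : ℕ) :
    (pId F n v).coeff k = ∑ i, (v i).coeff k • xbar F n ^ (i : ℕ) := by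
  simp only [pId, finsetSum_coeff, coeff_C_mul, coeff_map]
  exact Finset.sum_congr rfl fun _ _ => (mul_comm _ _).trans (Algebra.smul_def _ _).symm

theorem pId_add (v w : Fin n → F[X]) : pId F n (v + w) = pId F n v + pId F n w := by
  simp only [pId, Pi.add_apply, Polynomial.map_add, mul_add, Finset.sum_add_distrib]

theorem pId_zero : pId F n 0 = 0 := by
  simp [pId]

theorem pId_smul (p : F[X]) (v : Fin n → F[X]) :
    pId F n (p • v) = p.map (algebraMap F (Amod F n)) * pId F n v := by
  simp only [pId, Pi.smul_apply, smul_eq_mul, Polynomial.map_mul, Finset.mul_sum]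
  exact Finset.sum_congr rfl fun _ _ => by ring

theorem pId_bijective (hn : 0 < n) : Function.Bijective (pId F n) := by
  set b := Amod.basis (F := F) hn
  have hcoeff : ∀ v k, (pId F n v).coeff k = b.equivFun.symm fun i => (v i).coeff k := by
    intro v k
    simp only [coeff_pId, b.equivFun_symm_apply, b, Amod.basis_apply]
  refine ⟨fun v w hvw => funext fun i => ext fun k => ?_, fun h => ?_⟩
  · have := congrArg (coeff · k) hvw
    simp only [hcoeff] at this
    exact congrFun (b.equivFun.symm.injective this) i
  · refine ⟨fun i => ∑ k ∈ h.support, monomial k (b.equivFun (h.coeff k) i), ext fun k => ?_⟩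
    simp only [hcoeff, finsetSum_coeff, coeff_monomial, Finset.sum_ite_eq']
    split_ifs with hk
    · simp
    · simp [notMem_support_iff.1 hk]

end Amod

section DelayFree

variable {F A : Type*} [CommRing F] [CommRing A] [Algebra F A] (σ : A ≃ₐ[F] A)

def principalLeftIdeal (g : A[X]) : Set A[X] := {f | ∃ u, f = skewMul σ u g}

structure IsDelayFreeLeftIdeal (J : Set A[X]) : Prop where
  zero_mem : 0 ∈ J
  add_mem : ∀ a ∈ J, ∀ b ∈ J, a + b ∈ J
  skewMul_mem : ∀ f, ∀ a ∈ J, skewMul σ f a ∈ J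
  mem_of_X_mul_mem : ∀ a, X * a ∈ J → a ∈ J

def SuppEqSuppCoeffZero (g : A[X]) : Prop :=
  ∀ e : A, IsPrimIdem e → (skewMul σ (C e) g ≠ 0 ↔ e * g.coeff 0 ≠ 0)

-- `t = 0` exactly when no element of `J ∩ eR` has a nonzero constant term.
structure IsMinimalInComponent (J : Set A[X]) (e : A) (t : A[X]) : Prop where
  mem : t ∈ J
  skewMul_C_eq : skewMul σ (C e) t = t
  coeff_zero_ne_zero : t ≠ 0 → t.coeff 0 ≠ 0
  le : ∀ h ∈ J, skewMul σ (C e) h = h → h.coeff 0 ≠ 0 → t.coeff 0 ≠ 0 ∧ t.natDegree ≤ h.natDegree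

variable {σ}

namespace principalLeftIdeal

variable {g : A[X]}

theorem self_mem : g ∈ principalLeftIdeal σ g := ⟨1, (skewMul_one_left σ g).symm⟩

theorem skewMul_mem (f : A[X]) {a : A[X]} (ha : a ∈ principalLeftIdeal σ g) :
    skewMul σ f a ∈ principalLeftIdeal σ g := by
  obtain ⟨u, rfl⟩ := ha
  exact ⟨skewMul σ f u, skewMul_assoc σ f u g⟩

theorem zero_mem : (0 : A[X]) ∈ principalLeftIdeal σ g := ⟨0, (skewMul_zero_left σ g).symm⟩

theorem add_mem {a b : A[X]} (ha : a ∈ principalLeftIdeal σ g) (hb : b ∈ principalLeftIdeal σ g) :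
    a + b ∈ principalLeftIdeal σ g := by
  obtain ⟨u, rfl⟩ := ha
  obtain ⟨v, rfl⟩ := hb
  exact ⟨u + v, (skewMul_add_left σ u v g).symm⟩

theorem sum_mem {ι : Type*} (s : Finset ι) {f : ι → A[X]}
    (hf : ∀ i ∈ s, f i ∈ principalLeftIdeal σ g) : ∑ i ∈ s, f i ∈ principalLeftIdeal σ g :=
  Finset.sum_induction f (· ∈ principalLeftIdeal σ g) (fun _ _ => add_mem) zero_mem hf

end principalLeftIdeal

theorem exists_isMinimalInComponent {J : Set A[X]} (h0 : (0 : A[X]) ∈ J) (e : A) :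
    ∃ t, IsMinimalInComponent σ J e t := by
  classical
  by_cases hex : ∃ d, ∃ h ∈ J, skewMul σ (C e) h = h ∧ h.coeff 0 ≠ 0 ∧ h.natDegree = d
  · obtain ⟨t, htJ, hte, ht0, htd⟩ := Nat.find_spec hex
    exact ⟨t, htJ, hte, fun _ => ht0, fun h hhJ hhe hh0 =>
      ⟨ht0, htd ▸ Nat.find_min' hex ⟨h, hhJ, hhe, hh0, rfl⟩⟩⟩
  · push Not at hex
    exact ⟨0, h0, skewMul_zero_right σ _, fun h => absurd rfl h,
      fun h hhJ hhe hh0 => absurd rfl (hex _ h hhJ hhe hh0)⟩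

namespace IsDelayFreeLeftIdeal

variable {J : Set A[X]}

theorem sum_mem (hJ : IsDelayFreeLeftIdeal σ J) {ι : Type*} (s : Finset ι) {f : ι → A[X]}
    (hf : ∀ i ∈ s, f i ∈ J) : ∑ i ∈ s, f i ∈ J :=
  Finset.sum_induction f (· ∈ J) (fun a b ha hb => hJ.add_mem a ha b hb) hJ.zero_mem hf

theorem mem_of_coeff_zero_eq_zero (hJ : IsDelayFreeLeftIdeal σ J) {g : A[X]} {N : ℕ}
    (ih : ∀ h ∈ J, h.natDegree < N → h ∈ principalLeftIdeal σ g) {k : A[X]} (hk : k ∈ J)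
    (hk0 : k.coeff 0 = 0) (hkN : k.natDegree ≤ N) : k ∈ principalLeftIdeal σ g := by
  obtain ⟨k', rfl⟩ := X_dvd_iff.2 hk0
  rcases eq_or_ne k' 0 with rfl | hk'
  · rw [mul_zero]
    exact principalLeftIdeal.zero_mem
  have : Nontrivial A := nontrivial_iff.1 ⟨k', 0, hk'⟩
  rw [natDegree_X_mul hk'] at hkN
  rw [← skewMul_X_left σ]
  exact principalLeftIdeal.skewMul_mem X (ih k' (hJ.mem_of_X_mul_mem k' hk) (by omega))

theorem mem_of_skewMul_C_eq_self [IsSemisimpleRing A] (hJ : IsDelayFreeLeftIdeal σ J)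
    {g : A[X]} {N : ℕ} (ih : ∀ h ∈ J, h.natDegree < N → h ∈ principalLeftIdeal σ g)
    {e : A} (he : IsPrimIdem e) {t : A[X]} (ht : IsMinimalInComponent σ J e t)
    (htg : t ∈ principalLeftIdeal σ g) {k : A[X]} (hk : k ∈ J) (hek : skewMul σ (C e) k = k)
    (hkN : k.natDegree ≤ N) : k ∈ principalLeftIdeal σ g := by
  by_cases hk0 : k.coeff 0 = 0
  · exact hJ.mem_of_coeff_zero_eq_zero ih hk hk0 hkN
  obtain ⟨ht0, htk⟩ := ht.le k hk hek hk0
  have hcoeff {h : A[X]} (hh : skewMul σ (C e) h = h) : e * h.coeff 0 = h.coeff 0 := by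
    rw [← coeff_zero_skewMul_C σ, hh]
  obtain ⟨c, hc⟩ := he.exists_mul_eq (hcoeff ht.skewMul_C_eq) ht0
  set a := k.coeff 0 * c
  have ha : a * t.coeff 0 = k.coeff 0 := by rw [mul_assoc, hc, mul_comm, hcoeff hek]
  set d := k + skewMul σ (C (-a)) t
  have hdJ : d ∈ J := hJ.add_mem _ hk _ (hJ.skewMul_mem _ _ ht.mem)
  have hd0 : d.coeff 0 = 0 := by
    rw [coeff_add, coeff_zero_skewMul_C, neg_mul, ha, add_neg_cancel]
  have hdN : d.natDegree ≤ N :=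
    (natDegree_add_le _ _).trans (max_le hkN ((natDegree_skewMul_C_le σ _ _).trans (htk.trans hkN)))
  have hkd : k = d + skewMul σ (C a) t := by
    rw [add_assoc, ← skewMul_add_left, ← C_add, neg_add_cancel, C_0, skewMul_zero_left, add_zero]
  rw [hkd]
  exact principalLeftIdeal.add_mem (hJ.mem_of_coeff_zero_eq_zero ih hdJ hd0 hdN)
    (principalLeftIdeal.skewMul_mem _ htg)

theorem subset_principalLeftIdeal [Finite A] [IsReduced A] (hJ : IsDelayFreeLeftIdeal σ J)
    {g : A[X]} (hg : ∀ e, IsPrimIdem e → IsMinimalInComponent σ J e (skewMul σ (C e) g)) :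
    J ⊆ principalLeftIdeal σ g := by
  have := IsArtinianRing.isSemisimpleRing_of_isReduced A
  intro h hh
  induction hN : h.natDegree using Nat.strong_induction_on generalizing h with
  | _ N ih =>
  rw [← sum_skewMul_C_primIdems σ h]
  refine principalLeftIdeal.sum_mem _ fun e he => ?_
  have he := mem_primIdems.1 he
  refine hJ.mem_of_skewMul_C_eq_self (fun k hk hkN => ih _ hkN hk rfl) he (hg e he)
    (principalLeftIdeal.skewMul_mem _ principalLeftIdeal.self_mem) (hJ.skewMul_mem _ _ hh) ?_
    (hN ▸ natDegree_skewMul_C_le σ _ _)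
  rw [skewMul_C_skewMul_C, he.1]

theorem exists_generator [Finite A] [IsReduced A] (hJ : IsDelayFreeLeftIdeal σ J) :
    ∃ g, J = principalLeftIdeal σ g ∧ SuppEqSuppCoeffZero σ g := by
  choose t ht using exists_isMinimalInComponent (σ := σ) hJ.zero_mem
  set g := ∑ e ∈ primIdems A, t e
  have hgt : ∀ e, IsPrimIdem e → skewMul σ (C e) g = t e := by
    intro e he
    rw [skewMul_sum_right, Finset.sum_eq_single_of_mem e (mem_primIdems.2 he) fun e' he' hne => ?_,
      (ht e).skewMul_C_eq]
    rw [← (ht e').skewMul_C_eq, skewMul_C_skewMul_C,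
      he.mul_eq_zero_of_ne (mem_primIdems.1 he') hne.symm, C_0, skewMul_zero_left]
  refine ⟨g, (hJ.subset_principalLeftIdeal fun e he => hgt e he ▸ ht e).antisymm ?_,
    fun e he => ?_⟩
  · rintro _ ⟨u, rfl⟩
    exact hJ.skewMul_mem u g (hJ.sum_mem _ fun e _ => (ht e).mem)
  · rw [← coeff_zero_skewMul_C σ, hgt e he]
    exact ⟨(ht e).coeff_zero_ne_zero, fun h h0 => h (by rw [h0, coeff_zero])⟩

end IsDelayFreeLeftIdeal

namespace SuppEqSuppCoeffZero

variable [Finite A] [IsReduced A] {g : A[X]}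

theorem skewMul_C_eq_zero (hg : SuppEqSuppCoeffZero σ g) {a : A} (ha : a * g.coeff 0 = 0) :
    skewMul σ (C a) g = 0 := by
  have := IsArtinianRing.isSemisimpleRing_of_isReduced A
  rw [← sum_skewMul_C_primIdems σ g, skewMul_sum_right]
  refine Finset.sum_eq_zero fun e he => ?_
  have he := mem_primIdems.1 he
  by_cases h : e * g.coeff 0 = 0
  · rw [not_not.1 fun hne => (hg e he).1 hne h, skewMul_zero_right]
  · obtain ⟨c, hc⟩ := he.exists_mul_eq (y := e * g.coeff 0) (by rw [← mul_assoc, he.1]) h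
    have hae : a * e = 0 := by rw [← hc]; linear_combination c * e * ha
    rw [skewMul_C_skewMul_C, hae, C_0, skewMul_zero_left]

theorem mem_of_X_mul_mem (hg : SuppEqSuppCoeffZero σ g) {f : A[X]}
    (hf : X * f ∈ principalLeftIdeal σ g) : f ∈ principalLeftIdeal σ g := by
  obtain ⟨u, hu⟩ := hf
  set a := u.coeff 0
  have ha : a * g.coeff 0 = 0 := by
    rw [← coeff_zero_skewMul σ, ← hu, mul_coeff_zero, coeff_X_zero, zero_mul]
  obtain ⟨u', hu'⟩ := X_dvd_iff.2 (show (u - C a).coeff 0 = 0 by simp [a])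
  have hsplit : u = C a + X * u' := by rw [← hu']; ring
  refine ⟨u', isRegular_X.left (show X * f = X * skewMul σ u' g from ?_)⟩
  rw [hu, hsplit, skewMul_add_left, hg.skewMul_C_eq_zero ha, zero_add, ← skewMul_X_left σ,
    ← skewMul_assoc, skewMul_X_left]

end SuppEqSuppCoeffZero

end DelayFree

section SigmaCyclic

variable {F : Type} [Field F] {n : ℕ} {σ : Amod F n ≃ₐ[F] Amod F n}
  {C : Submodule F[X] (Fin n → F[X])}

theorem pId_X_smul (v : Fin n → F[X]) : pId F n ((X : F[X]) • v) = X * pId F n v := by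
  rw [pId_smul, Polynomial.map_X]

theorem isDelayFreeLeftIdeal_image_pId (hn : 0 < n)
    (hcyc : ∀ f v, v ∈ C → ∃ w ∈ C, pId F n w = skewMul σ f (pId F n v))
    (hdf : ∀ v, (X : F[X]) • v ∈ C → v ∈ C) : IsDelayFreeLeftIdeal σ (pId F n '' C) where
  zero_mem := ⟨0, C.zero_mem, pId_zero⟩
  add_mem := by
    rintro _ ⟨v, hv, rfl⟩ _ ⟨w, hw, rfl⟩
    exact ⟨v + w, C.add_mem hv hw, pId_add v w⟩
  skewMul_mem := by
    rintro f _ ⟨v, hv, rfl⟩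
    exact hcyc f v hv
  mem_of_X_mul_mem a ha := by
    obtain ⟨v, rfl⟩ := (pId_bijective hn).2 a
    rw [← pId_X_smul, (pId_bijective hn).1.mem_set_image] at ha
    exact ⟨v, hdf v ha, rfl⟩

theorem sigmaCyclic_and_delayFree_of_generator [Finite F] (hn : 0 < n)
    (hchar : ¬ ringChar F ∣ n) {g : (Amod F n)[X]}
    (hC : ∀ v, v ∈ C ↔ pId F n v ∈ principalLeftIdeal σ g) (hg : SuppEqSuppCoeffZero σ g) :
    (∀ f v, v ∈ C → ∃ w ∈ C, pId F n w = skewMul σ f (pId F n v)) ∧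
      ∀ v, (X : F[X]) • v ∈ C → v ∈ C := by
  have := Amod.finite (F := F) hn
  have := Amod.isReduced hchar
  refine ⟨fun f v hv => ?_, fun v hv => ?_⟩
  · obtain ⟨w, hw⟩ := (pId_bijective hn).2 (skewMul σ f (pId F n v))
    exact ⟨w, (hC w).2 (hw ▸ principalLeftIdeal.skewMul_mem f ((hC v).1 hv)), hw⟩
  · exact (hC v).2 (hg.mem_of_X_mul_mem (pId_X_smul v ▸ (hC _).1 hv))

end SigmaCyclic

/-- C ⊆ F[z]^n is σ-cyclic and delay-free iff p(C) is the principal left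
ideal of R = A[z;σ] generated by a polynomial g whose support equals the support of its
z-free term.  In particular every delay-free left ideal of R is a principal left ideal. -/
theorem stmt_8 (F : Type) [Field F] [Fintype F] (n : ℕ) (hn : 0 < n)
    (hchar : ¬ (ringChar F ∣ n))
    (σ : Amod F n ≃ₐ[F] Amod F n)
    (C : Submodule (Polynomial F) (Fin n → Polynomial F)) :
    (((∀ (f : Polynomial (Amod F n)) (v : Fin n → Polynomial F), v ∈ C →
          ∃ w ∈ C, pId F n w = skewMul σ f (pId F n v)) ∧
        (∀ v : Fin n → Polynomial F, (Polynomial.X : Polynomial F) • v ∈ C → v ∈ C)) ↔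
      (∃ g : Polynomial (Amod F n),
        (∀ v : Fin n → Polynomial F, v ∈ C ↔ ∃ u, pId F n v = skewMul σ u g) ∧
        (∀ e : Amod F n, IsPrimIdem e →
          (skewMul σ (Polynomial.C e) g ≠ 0 ↔ e * g.coeff 0 ≠ 0)))) ∧
    (∀ J : Set (Polynomial (Amod F n)),
        (0 : Polynomial (Amod F n)) ∈ J →
        (∀ a ∈ J, ∀ b ∈ J, a + b ∈ J) →
        (∀ (f : Polynomial (Amod F n)), ∀ a ∈ J, skewMul σ f a ∈ J) →
        (∀ (k : ℕ) (a : Polynomial (Amod F n)),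
            skewMul σ (Polynomial.X ^ k) a ∈ J → a ∈ J) →
        ∃ g : Polynomial (Amod F n), J = {f | ∃ u, f = skewMul σ u g}) := by
  have := Amod.finite (F := F) hn
  have := Amod.isReduced hchar
  refine ⟨⟨fun ⟨hcyc, hdf⟩ => ?_, fun ⟨g, hC, hg⟩ =>
    sigmaCyclic_and_delayFree_of_generator hn hchar hC hg⟩, fun J h0 hadd hmul hdelay => ?_⟩
  · obtain ⟨g, hJ, hg⟩ := (isDelayFreeLeftIdeal_image_pId hn hcyc hdf).exists_generator
    exact ⟨g, fun v => by rw [← SetLike.mem_coe, ← (pId_bijective hn).1.mem_set_image, hJ]; rfl, hg⟩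
  · have hJ : IsDelayFreeLeftIdeal σ J :=
      ⟨h0, hadd, hmul, fun a ha => hdelay 1 a (by rwa [skewMul_X_pow_left, pow_one])⟩
    obtain ⟨g, hg, -⟩ := hJ.exists_generator
    exact ⟨g, hg⟩
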